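/- (Conditional Lovász local lemma two-stage bound) Let t, k, v be integers with k ≥ 2t, t ≥ 2 and v ≥ 2. Then CAN(t,k,v) ≤ ⌈log(e·t·C(k,t−1)) / log(v^t/(v^t − 1))⌉ + ⌊k·e^t·(v^t − 1)·(1 − 1/t)^{t−1} / t^2⌋. (Here e is Euler's number.) -/

import Mathlib

/-- An `N × k` array `A` over alphabet `Fin v` covers the `t`-way interaction
given by distinct columns `c` and values `a` if some row agrees with `a` on `c`. -/
def Covers {N k v t : ℕ} (A : Fin N → Fin k → Fin v)
    (c : Fin t → Fin k) (a : Fin t → Fin v) : Prop :=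
  ∃ r : Fin N, ∀ i : Fin t, A r (c i) = a i

/-- `A` is a covering array `CA(N; t, k, v)`: every `t`-way interaction is covered. -/
def IsCoveringArray (N t k v : ℕ) (A : Fin N → Fin k → Fin v) : Prop :=
  ∀ c : Fin t → Fin k, Function.Injective c → ∀ a : Fin t → Fin v, Covers A c a

/-- The covering array number `CAN(t, k, v)`: the least `N` admitting a `CA(N; t, k, v)`. -/
noncomputable def CAN (t k v : ℕ) : ℕ :=
  sInf {N : ℕ | ∃ A : Fin N → Fin k → Fin v, IsCoveringArray N t k v A}

/-!
Two-stage construction. Choose an `n`-row array at random: a fixed interaction (a `t`-set of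
columns together with a value tuple) is missed by a uniformly random row with probability
`1 - v⁻ᵗ`, so averaging over all `n`-row arrays yields one missing at most
`C(k, t) vᵗ (1 - v⁻ᵗ)ⁿ` interactions; appending one row per missed interaction gives a covering
array. With the given `n`, `(1 - v⁻ᵗ)ⁿ ≤ 1 / (e t C(k, t-1))`, and `t C(k, t) ≤ k C(k, t-1)`
bounds the number of appended rows by `k vᵗ / (e t²)`, which is at most the floor term because
`vᵗ ≤ 2 (vᵗ - 1)`, `2 ≤ eᵗ` and `(1 - 1/t)ᵗ⁻¹ ≥ 1/e`.
-/
open Finset Function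

namespace CoveringArray

variable {N t k v : ℕ}

lemma card_orderEmbedding_fin (t k : ℕ) : Fintype.card (Fin t ↪o Fin k) = k.choose t := by
  rw [Fintype.card_congr Set.powersetCard.ofFinEmbEquiv, ← Nat.card_eq_fintype_card,
    Set.powersetCard.card, Nat.card_eq_fintype_card, Fintype.card_fin]

def matchingRows (c : Fin t → Fin k) (a : Fin t → Fin v) : Finset (Fin k → Fin v) :=
  Fintype.piFinset fun x => {y | ∀ i, c i = x → y = a i}

lemma mem_matchingRows {c : Fin t → Fin k} {a : Fin t → Fin v} {g : Fin k → Fin v} :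
    g ∈ matchingRows c a ↔ ∀ i, g (c i) = a i := by
  simp only [matchingRows, Fintype.mem_piFinset, mem_filter, mem_univ, true_and]
  exact ⟨fun h i => h _ i rfl, fun h _ i hx => hx ▸ h i⟩

lemma card_matchingRows {c : Fin t → Fin k} (hc : Injective c) (a : Fin t → Fin v) :
    #(matchingRows c a) = v ^ (k - t) := by
  have hfiber : ∀ x, #({y | ∀ i, c i = x → y = a i} : Finset (Fin v)) =
      if x ∈ (univ.map ⟨c, hc⟩)ᶜ then v else 1 := by
    intro x
    by_cases hx : ∃ i, c i = x
    · obtain ⟨i, rfl⟩ := hx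
      have : ({y | ∀ j, c j = c i → y = a j} : Finset (Fin v)) = {a i} := by
        ext y; simp [hc.eq_iff]
      simp [this]
    · push Not at hx
      simp [hx]
  rw [matchingRows, Fintype.card_piFinset, Finset.prod_congr rfl fun x _ => hfiber x,
    prod_ite_mem, univ_inter, prod_const, card_compl, card_map, card_univ, Fintype.card_fin,
    Fintype.card_fin]

open scoped Classical in
lemma card_filter_not_covers {c : Fin t → Fin k} (hc : Injective c) (a : Fin t → Fin v) :
    #{A : Fin N → Fin k → Fin v | ¬ Covers A c a} = (v ^ (k - t) * (v ^ t - 1)) ^ N := by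
  have hpi : ({A | ¬ Covers A c a} : Finset (Fin N → Fin k → Fin v)) =
      Fintype.piFinset fun _ => (matchingRows c a)ᶜ := by
    ext A; simp [Covers, mem_matchingRows]
  have hsplit : v ^ k = v ^ (k - t) * v ^ t := by
    rw [← pow_add, Nat.sub_add_cancel (by simpa using Fintype.card_le_of_injective c hc)]
  rw [hpi, Fintype.card_piFinset, prod_const, card_compl, card_matchingRows hc,
    Fintype.card_fun, card_univ, Fintype.card_fin, Fintype.card_fin, Fintype.card_fin, hsplit,
    Nat.mul_sub_one]

/-- A `t`-way interaction with its columns listed in increasing order, so that there are exactly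
`C(k, t)` column choices; `covers_of_comp_perm` reduces arbitrary interactions to these. -/
abbrev Interaction (t k v : ℕ) := (Fin t ↪o Fin k) × (Fin t → Fin v)

open scoped Classical in
noncomputable def uncovered (t : ℕ) (A : Fin N → Fin k → Fin v) : Finset (Interaction t k v) :=
  {p | ¬ Covers A p.1 p.2}

lemma sum_card_uncovered :
    ∑ A : Fin N → Fin k → Fin v, #(uncovered t A) =
      k.choose t * v ^ t * (v ^ (k - t) * (v ^ t - 1)) ^ N := by
  classical
  calc ∑ A : Fin N → Fin k → Fin v, #(uncovered t A)
      = ∑ p : Interaction t k v, #{A : Fin N → Fin k → Fin v | ¬ Covers A p.1 p.2} :=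
        sum_card_bipartiteAbove_eq_sum_card_bipartiteBelow _
    _ = ∑ _p : Interaction t k v, (v ^ (k - t) * (v ^ t - 1)) ^ N :=
        sum_congr rfl fun p _ => card_filter_not_covers p.1.injective p.2
    _ = _ := by
        rw [sum_const, card_univ, Fintype.card_prod, card_orderEmbedding_fin, Fintype.card_fun,
          Fintype.card_fin, Fintype.card_fin, smul_eq_mul]

lemma exists_card_uncovered_le [NeZero v] (htk : t ≤ k) (N : ℕ) :
    ∃ A : Fin N → Fin k → Fin v,
      (#(uncovered t A) : ℝ) ≤ k.choose t * (v : ℝ) ^ t * (((v : ℝ) ^ t - 1) / v ^ t) ^ N := by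
  obtain ⟨A, -, hA⟩ := exists_le_of_sum_le (s := univ) univ_nonempty
    (f := fun A : Fin N → Fin k → Fin v => (#(uncovered t A) : ℝ))
    (g := fun _ => k.choose t * (v : ℝ) ^ t * (((v : ℝ) ^ t - 1) / v ^ t) ^ N) <| le_of_eq <| by
      have hv : (v : ℝ) ≠ 0 := by exact_mod_cast NeZero.ne v
      have hsplit : (v : ℝ) ^ k = v ^ (k - t) * v ^ t := by
        rw [← pow_add, Nat.sub_add_cancel htk]
      rw [← Nat.cast_sum, sum_card_uncovered, sum_const, card_univ, Fintype.card_fun,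
        Fintype.card_fun, Fintype.card_fin, Fintype.card_fin, Fintype.card_fin, nsmul_eq_mul]
      push_cast [Nat.one_le_pow _ _ (NeZero.pos v)]
      rw [hsplit, div_pow, mul_pow, mul_pow]
      field_simp
  exact ⟨A, hA⟩

lemma covers_of_comp_perm {A : Fin N → Fin k → Fin v} {c : Fin t → Fin k} {a : Fin t → Fin v}
    (σ : Equiv.Perm (Fin t)) (h : Covers A (c ∘ σ) (a ∘ σ)) : Covers A c a := by
  obtain ⟨r, hr⟩ := h
  exact ⟨r, fun i => by simpa using hr (σ.symm i)⟩

lemma isCoveringArray_of_forall_covers {A : Fin N → Fin k → Fin v}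
    (h : ∀ (e : Fin t ↪o Fin k) a, Covers A e a) : IsCoveringArray N t k v A := by
  intro c hc a
  let σ := Tuple.sort c
  have hsorted : StrictMono (c ∘ σ) :=
    (Tuple.monotone_sort c).strictMono_of_injective (hc.comp σ.injective)
  exact covers_of_comp_perm σ (h (OrderEmbedding.ofStrictMono _ hsorted) (a ∘ σ))

lemma CAN_le_add_card_uncovered [NeZero v] (A : Fin N → Fin k → Fin v) :
    CAN t k v ≤ N + #(uncovered t A) := by
  set U := uncovered t A
  let B : Fin (N + #U) → Fin k → Fin v :=
    Fin.append A fun j => extend (U.equivFin.symm j).1.1 (U.equivFin.symm j).1.2 0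
  refine Nat.sInf_le ⟨B, isCoveringArray_of_forall_covers fun e a => ?_⟩
  by_cases hA : Covers A e a
  · obtain ⟨r, hr⟩ := hA
    exact ⟨Fin.castAdd _ r, by simpa [B] using hr⟩
  · have hp : (e, a) ∈ U := by simpa [U, uncovered] using hA
    refine ⟨Fin.natAdd N (U.equivFin ⟨_, hp⟩), fun i => ?_⟩
    simp [B, e.injective.extend_apply]

end CoveringArray

open Real

lemma le_pow_natCeil_log_div_log {r M : ℝ} (hr : 1 < r) (hM : 0 < M) :
    M ≤ r ^ ⌈log M / log r⌉₊ := by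
  rw [← log_le_log_iff hM (by positivity), log_pow]
  exact (div_le_iff₀ (log_pos hr)).1 (Nat.le_ceil _)

lemma inv_exp_one_le_one_sub_inv_pow (t : ℕ) : (exp 1)⁻¹ ≤ (1 - 1 / (t : ℝ)) ^ (t - 1) := by
  by_cases ht : t ≤ 1
  · rw [Nat.sub_eq_zero_of_le ht, pow_zero]
    exact inv_le_one_of_one_le₀ (one_le_exp zero_le_one)
  · obtain ⟨n, rfl⟩ : ∃ n, t = n + 1 + 1 := ⟨t - 2, by omega⟩
    have hbase : 1 - 1 / ((n + 1 + 1 : ℕ) : ℝ) = (1 + ((n + 1 : ℕ) : ℝ)⁻¹)⁻¹ := by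
      push_cast
      field_simp
      ring
    rw [hbase, Nat.add_sub_cancel, inv_pow]
    exact inv_anti₀ (by positivity) one_add_inv_pow_le_exp

lemma choose_mul_pow_mul_sub_one_div_pow_le {t k v n : ℕ} (ht : 1 ≤ t) (htk : t ≤ k)
    (hv : 2 ≤ v)
    (hn : exp 1 * t * k.choose (t - 1) ≤ ((v : ℝ) ^ t / ((v : ℝ) ^ t - 1)) ^ n) :
    k.choose t * (v : ℝ) ^ t * (((v : ℝ) ^ t - 1) / v ^ t) ^ n ≤
      k * exp 1 ^ t * ((v : ℝ) ^ t - 1) * (1 - 1 / (t : ℝ)) ^ (t - 1) / (t : ℝ) ^ 2 := by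
  set V : ℝ := (v : ℝ) ^ t
  have hV : 2 ≤ V := by
    calc (2 : ℝ) ≤ v := by exact_mod_cast hv
      _ ≤ V := le_self_pow₀ (by norm_num; omega) (by omega)
  have he : 2 ≤ exp 1 ^ t :=
    (by linarith [add_one_le_exp (1 : ℝ)] : (2 : ℝ) ≤ exp 1).trans
      (le_self_pow₀ (one_le_exp zero_le_one) (by omega))
  have hchoose : (k.choose t * t : ℝ) ≤ k.choose (t - 1) * k := by
    have h := Nat.choose_succ_right_eq k (t - 1)
    rw [Nat.sub_add_cancel ht] at h
    exact_mod_cast h ▸ Nat.mul_le_mul_left _ (Nat.sub_le k (t - 1))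
  have hC : (0 : ℝ) < k.choose (t - 1) := by exact_mod_cast Nat.choose_pos (by omega)
  have ht0 : (0 : ℝ) < t := by exact_mod_cast ht
  calc k.choose t * V * ((V - 1) / V) ^ n = k.choose t * V / (V / (V - 1)) ^ n := by
        rw [div_eq_mul_inv _ ((V / (V - 1)) ^ n), ← inv_pow, inv_div]
    _ ≤ k.choose t * V / (exp 1 * t * k.choose (t - 1)) := by gcongr
    _ = (k.choose t * t) * V / (exp 1 * t ^ 2 * k.choose (t - 1)) := by field_simp
    _ ≤ (k.choose (t - 1) * k) * V / (exp 1 * t ^ 2 * k.choose (t - 1)) := by gcongr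
    _ = k * V * (exp 1)⁻¹ / t ^ 2 := by field_simp
    _ ≤ k * (exp 1 ^ t * (V - 1)) * (1 - 1 / (t : ℝ)) ^ (t - 1) / t ^ 2 := by
        gcongr
        · exact mul_nonneg (Nat.cast_nonneg k) (mul_nonneg (by positivity) (by linarith))
        · nlinarith
        · exact inv_exp_one_le_one_sub_inv_pow t
    _ = _ := by ring

open CoveringArray in
theorem conditional_lll_two_stage (t k v : ℕ) (ht : 2 ≤ t) (hk : 2 * t ≤ k)
    (hv : 2 ≤ v) :
    CAN t k v ≤
      ⌈Real.log (Real.exp 1 * (t : ℝ) * (Nat.choose k (t - 1) : ℝ)) /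
          Real.log ((v : ℝ) ^ t / ((v : ℝ) ^ t - 1))⌉₊ +
        ⌊(k : ℝ) * (Real.exp 1) ^ t * ((v : ℝ) ^ t - 1) *
            (1 - 1 / (t : ℝ)) ^ (t - 1) / (t : ℝ) ^ 2⌋₊ := by
  have htk : t ≤ k := by omega
  have : NeZero v := ⟨by omega⟩
  have hV : (1 : ℝ) < (v : ℝ) ^ t := one_lt_pow₀ (by exact_mod_cast hv) (by omega)
  have hM : 0 < exp 1 * t * k.choose (t - 1) := by
    have := Nat.choose_pos (n := k) (k := t - 1) (by omega)
    positivity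
  set n := ⌈log (exp 1 * t * k.choose (t - 1)) / log ((v : ℝ) ^ t / ((v : ℝ) ^ t - 1))⌉₊
  have hr : 1 < (v : ℝ) ^ t / ((v : ℝ) ^ t - 1) := (one_lt_div (by linarith)).2 (by linarith)
  have hn := le_pow_natCeil_log_div_log hr hM
  obtain ⟨A, hA⟩ := exists_card_uncovered_le (v := v) htk n
  calc CAN t k v ≤ n + #(uncovered t A) := CAN_le_add_card_uncovered A
    _ ≤ _ := by
      gcongr
      exact Nat.le_floor (hA.trans (choose_mul_pow_mul_sub_one_div_pow_le (by omega) htk hv hn))
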